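/- Let a ≥ 2 be fixed and let X_1,…,X_n be i.i.d. uniform on {1,…,a}. Then the expected total number of weakly increasing subsequences satisfies E[Y_n^{(a)}] ~ (1 / ((a−1)! · a^{a−1})) · n^{a−1} · (1 + 1/a)^{n−a+1} as n → ∞. -/

import Mathlib

open Finset Filter

noncomputable section
attribute [local instance] Classical.propDecidable

/-- Probability weight of the word `x` when the letters are i.i.d. with distribution `p`. -/
def wordWt {n a : ℕ} (p : Fin a → ℝ) (x : Fin n → Fin a) : ℝ := ∏ i, p (x i)

/-- Number of weakly increasing subsequences of length `k` of the word `x`. -/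
def numWIS (n a k : ℕ) (x : Fin n → Fin a) : ℕ :=
  (univ.filter fun f : Fin k → Fin n => StrictMono f ∧ Monotone (x ∘ f)).card

/-- Expected number of weakly increasing subsequences of length `k`. -/
def expY (n a k : ℕ) (p : Fin a → ℝ) : ℝ :=
  ∑ x : Fin n → Fin a, wordWt p x * (numWIS n a k x : ℝ)
/-- Expected total number of weakly increasing subsequences (including the empty one). -/
def expYtot (n a : ℕ) (p : Fin a → ℝ) : ℝ :=
  ∑ x : Fin n → Fin a, wordWt p x * (∑ k ∈ Finset.range (n + 1), (numWIS n a k x : ℝ))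

/-!
By linearity, `E[Y_n] = ∑ₖ C(n,k) M(k) / aᵏ`, where `M(k) = C(a-1+k, k)` counts the weakly
increasing words of length `k` over `a` letters (adding `i` to the `i`-th letter makes them
strictly increasing words over `a-1+k` letters). Vandermonde's identity
`C(a-1+k, k) = ∑_{r<a} C(a-1,r) C(k,r)` and `∑ₖ C(n,k) C(k,r) xᵏ = C(n,r) xʳ (1+x)^(n-r)` turn
this into a sum of `a` terms `C(a-1,r) C(n,r) a^(-r) (1+1/a)^(n-r)`; since `C(n,r) ~ nʳ/r!`,
the term `r = a-1` dominates.
-/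

open Asymptotics Topology

theorem Nat.card_strictMono_fin (k n : ℕ) :
    Nat.card {f : Fin k → Fin n // StrictMono f} = n.choose k := by
  have e : {f : Fin k → Fin n // StrictMono f} ≃ (Fin k ↪o Fin n) :=
    { toFun f := OrderEmbedding.ofStrictMono f.1 f.2
      invFun e := ⟨e, e.strictMono⟩
      left_inv _ := rfl
      right_inv _ := rfl }
  rw [Nat.card_congr (e.trans Set.powersetCard.ofFinEmbEquiv), Set.powersetCard.card,
    Nat.card_eq_fintype_card, Fintype.card_fin]

theorem StrictMono.fin_val_apply_add_sub_le {k N : ℕ} {h : Fin k → Fin N} (hh : StrictMono h)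
    {i j : Fin k} (hij : i ≤ j) : (h i : ℕ) + (j - i) ≤ h j := by
  have hmaps : Set.MapsTo h (Icc i j) (Icc (h i) (h j)) := fun x hx => by
    simp only [coe_Icc, Set.mem_Icc] at hx ⊢
    exact ⟨hh.monotone hx.1, hh.monotone hx.2⟩
  have hcard := Finset.card_le_card_of_injOn h hmaps hh.injective.injOn
  have hmono : h i ≤ h j := hh.monotone hij
  simp only [Fin.card_Icc] at hcard
  rw [Fin.le_def] at hmono
  omega

theorem StrictMono.fin_val_le_apply_and_apply_add_le {k N : ℕ} {h : Fin k → Fin N}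
    (hh : StrictMono h) (i : Fin k) : (i : ℕ) ≤ h i ∧ (h i : ℕ) + k ≤ N + i := by
  have h0 := hh.fin_val_apply_add_sub_le (i := ⟨0, i.pos⟩) (j := i) (Nat.zero_le _)
  have hl := hh.fin_val_apply_add_sub_le (i := i) (j := ⟨k - 1, by omega⟩)
    (Fin.le_def.mpr (Nat.le_sub_one_of_lt i.isLt))
  have hlast := (h ⟨k - 1, by omega⟩).2
  simp only at h0 hl hlast
  omega

theorem Nat.card_monotone_fin (k m : ℕ) :
    Nat.card {g : Fin k → Fin (m + 1) // Monotone g} = (m + k).choose k := by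
  have e : {g : Fin k → Fin (m + 1) // Monotone g}
      ≃ {h : Fin k → Fin (m + k) // StrictMono h} :=
    { toFun g := ⟨fun i => ⟨(g.1 i : ℕ) + i, by omega⟩, fun i j hij => by
        have := g.2 hij.le
        simp only [Fin.lt_def, Fin.le_def] at this hij ⊢
        omega⟩
      invFun h := ⟨fun i => ⟨(h.1 i : ℕ) - i, by
          have := h.2.fin_val_le_apply_and_apply_add_le i
          omega⟩, fun i j hij => by
          have := h.2.fin_val_apply_add_sub_le hij
          have := h.2.fin_val_le_apply_and_apply_add_le i
          show (h.1 i : ℕ) - i ≤ h.1 j - j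
          rw [Fin.le_def] at hij
          omega⟩
      left_inv g := by ext i; simp
      right_inv h := by
        ext i
        have := h.2.fin_val_le_apply_and_apply_add_le i
        simp only
        omega }
  rw [Nat.card_congr e, Nat.card_strictMono_fin]

theorem Nat.card_subtype_comp_of_injective {ι κ α : Type*} [Finite κ] {f : ι → κ}
    (hf : Function.Injective f) (P : (ι → α) → Prop) :
    Nat.card {x : κ → α // P (x ∘ f)}
      = Nat.card {g // P g} * Nat.card α ^ (Nat.card κ - Nat.card ι) := by
  let e : (κ → α) ≃ (ι → α) × (↥(Set.range f)ᶜ → α) :=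
    (Equiv.piEquivPiSubtypeProd (· ∈ Set.range f) _).trans
      (Equiv.prodCongr ((Equiv.ofInjective f hf).arrowCongr (Equiv.refl α)).symm (Equiv.refl _))
  have he : ∀ x, (e x).1 = x ∘ f := fun x => rfl
  have hcompl : Nat.card ↥(Set.range f)ᶜ = Nat.card κ - Nat.card ι := by
    rw [Nat.card_coe_set_eq, Set.ncard_compl, ← Nat.card_coe_set_eq,
      Nat.card_range_of_injective hf]
  rw [Nat.card_congr ((e.subtypeEquiv fun x => by rw [he x]).trans
    Equiv.prodSubtypeFstEquivSubtypeProd), Nat.card_prod, Nat.card_fun, hcompl]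

theorem sum_numWIS (n m k : ℕ) :
    ∑ x : Fin n → Fin (m + 1), numWIS n (m + 1) k x
      = n.choose k * ((m + k).choose k * (m + 1) ^ (n - k)) := by
  have hfiber : ∀ f : Fin k → Fin n, StrictMono f →
      ∑ x : Fin n → Fin (m + 1), (if Monotone (x ∘ f) then 1 else 0)
        = (m + k).choose k * (m + 1) ^ (n - k) := fun f hf => by
    rw [sum_boole, Nat.cast_id, ← Fintype.card_subtype, ← Nat.card_eq_fintype_card,
      Nat.card_subtype_comp_of_injective hf.injective, Nat.card_monotone_fin]
    simp
  calc ∑ x : Fin n → Fin (m + 1), numWIS n (m + 1) k x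
      = ∑ f : Fin k → Fin n, ∑ x : Fin n → Fin (m + 1),
          if StrictMono f ∧ Monotone (x ∘ f) then 1 else 0 := by
        simp only [numWIS, card_filter]
        exact sum_comm
    _ = ∑ f : Fin k → Fin n,
          if StrictMono f then (m + k).choose k * (m + 1) ^ (n - k) else 0 := by
        refine sum_congr rfl fun f _ => ?_
        split_ifs with hf
        · simp only [hf, true_and, hfiber f hf]
        · simp [hf]
    _ = n.choose k * ((m + k).choose k * (m + 1) ^ (n - k)) := by
        rw [sum_ite, sum_const_zero, add_zero, sum_const, smul_eq_mul,
          ← Fintype.card_subtype, ← Nat.card_eq_fintype_card, Nat.card_strictMono_fin]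

theorem expYtot_eq_sum_expY (n a : ℕ) (p : Fin a → ℝ) :
    expYtot n a p = ∑ k ∈ range (n + 1), expY n a k p := by
  simp only [expYtot, expY, mul_sum]
  exact sum_comm

theorem expY_uniform (n m k : ℕ) :
    expY n (m + 1) k (fun _ => ((m + 1 : ℕ) : ℝ)⁻¹)
      = n.choose k * (m + k).choose k * ((m + 1 : ℕ) : ℝ)⁻¹ ^ k := by
  simp only [expY, wordWt, prod_const, card_univ, Fintype.card_fin, ← mul_sum, ← Nat.cast_sum,
    sum_numWIS]
  rcases lt_or_ge n k with hnk | hkn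
  · simp [Nat.choose_eq_zero_of_lt hnk]
  have ha : ((m + 1 : ℕ) : ℝ) ≠ 0 := by positivity
  rw [Nat.cast_mul, Nat.cast_mul, Nat.cast_pow, pow_sub₀ _ ha hkn, inv_pow, inv_pow]
  field_simp

theorem Nat.add_choose_eq_sum_choose_mul_choose (m k : ℕ) :
    (m + k).choose k = ∑ r ∈ range (m + 1), m.choose r * k.choose r := by
  rw [← Nat.choose_symm_add, add_comm, Nat.add_choose_eq,
    Nat.sum_antidiagonal_eq_sum_range_succ_mk]
  refine sum_congr rfl fun r hr => ?_
  rw [Nat.choose_symm (Nat.lt_succ_iff.mp (mem_range.mp hr)), mul_comm]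

theorem sum_range_choose_mul_choose_mul_pow {R : Type*} [CommSemiring R] (n r : ℕ) (x : R) :
    ∑ k ∈ range (n + 1), (n.choose k * k.choose r : R) * x ^ k
      = n.choose r * x ^ r * (1 + x) ^ (n - r) := by
  rcases lt_or_ge n r with hnr | hrn
  · rw [Nat.choose_eq_zero_of_lt hnr, Nat.cast_zero, zero_mul, zero_mul]
    refine sum_eq_zero fun k hk => ?_
    have hkr : k < r := by grind
    rw [Nat.choose_eq_zero_of_lt hkr, Nat.cast_zero, mul_zero, zero_mul]
  obtain ⟨d, rfl⟩ := Nat.exists_eq_add_of_le hrn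
  have hlow : ∑ k ∈ range r, (((r + d).choose k * k.choose r : ℕ) : R) * x ^ k = 0 :=
    sum_eq_zero fun k hk => by
      rw [Nat.choose_eq_zero_of_lt (mem_range.mp hk), mul_zero, Nat.cast_zero, zero_mul]
  simp only [← Nat.cast_mul] at hlow ⊢
  rw [add_assoc, sum_range_add, hlow, zero_add, Nat.add_sub_cancel_left, add_comm 1 x,
    add_pow, mul_assoc, mul_sum, mul_sum]
  refine sum_congr rfl fun j _ => ?_
  rw [Nat.choose_mul (Nat.le_add_right r j), Nat.add_sub_cancel_left, Nat.add_sub_cancel_left]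
  push_cast
  ring

theorem sum_range_choose_mul_add_choose_mul_pow {R : Type*} [CommSemiring R] (n m : ℕ) (x : R) :
    ∑ k ∈ range (n + 1), (n.choose k * (m + k).choose k : R) * x ^ k
      = ∑ r ∈ range (m + 1), m.choose r * (n.choose r * x ^ r * (1 + x) ^ (n - r)) := by
  simp_rw [Nat.add_choose_eq_sum_choose_mul_choose, Nat.cast_sum, mul_sum, sum_mul,
    ← sum_range_choose_mul_choose_mul_pow]
  rw [sum_comm]
  refine sum_congr rfl fun r _ => ?_
  rw [mul_sum]
  refine sum_congr rfl fun k _ => ?_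
  push_cast
  ring

theorem tendsto_choose_div_pow {r m : ℕ} (hrm : r ≤ m) :
    Tendsto (fun n : ℕ => (n.choose r : ℝ) / (n : ℝ) ^ m) atTop
      (𝓝 (if r = m then ((m.factorial : ℝ))⁻¹ else 0)) := by
  have hequiv : (fun n : ℕ => (n.choose r : ℝ) / (n : ℝ) ^ m)
      ~[atTop] fun n : ℕ => (n : ℝ) ^ r / r.factorial / (n : ℝ) ^ m :=
    (isEquivalent_choose r).div IsEquivalent.refl
  rw [hequiv.tendsto_nhds_iff]
  have hpos : ∀ᶠ n : ℕ in atTop, (n : ℝ) ≠ 0 :=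
    (eventually_ge_atTop 1).mono fun n hn => by positivity
  split_ifs with h
  · subst h
    refine tendsto_const_nhds.congr' (hpos.mono fun n hn => ?_)
    field_simp
  · have hmr : m - r ≠ 0 := by omega
    have hlim : Tendsto (fun n : ℕ => ((r.factorial : ℝ))⁻¹ * ((n : ℝ) ^ (m - r))⁻¹)
        atTop (𝓝 0) := by
      simpa using tendsto_const_nhds.mul ((tendsto_pow_atTop (α := ℝ) hmr).comp
        tendsto_natCast_atTop_atTop).inv_tendsto_atTop
    refine hlim.congr' (hpos.mono fun n hn => ?_)
    rw [pow_sub₀ _ hn hrm]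
    field_simp

theorem tendsto_sum_choose_mul_pow_div (m : ℕ) {x : ℝ} (hx : 1 + x ≠ 0) :
    Tendsto (fun n : ℕ =>
        (∑ r ∈ range (m + 1), m.choose r * (n.choose r * x ^ r * (1 + x) ^ (n - r)))
          / ((n : ℝ) ^ m * (1 + x) ^ (n - m))) atTop
      (𝓝 (x ^ m / m.factorial)) := by
  have hlim := tendsto_finsetSum (range (m + 1)) fun r hr =>
    (tendsto_choose_div_pow (Nat.lt_succ_iff.mp (mem_range.mp hr))).const_mul
      ((m.choose r : ℝ) * x ^ r * (1 + x) ^ (m - r))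
  simp only [mul_ite, mul_zero, sum_ite_eq', mem_range, Nat.lt_succ_self, if_true,
    Nat.choose_self, Nat.sub_self, pow_zero] at hlim
  rw [← div_eq_mul_inv, Nat.cast_one, one_mul, mul_one] at hlim
  refine hlim.congr' ((eventually_ge_atTop m).mono fun n hn => ?_)
  dsimp only
  rw [sum_div]
  refine sum_congr rfl fun r hr => ?_
  have hrm : r ≤ m := Nat.lt_succ_iff.mp (mem_range.mp hr)
  rw [show n - r = (n - m) + (m - r) by omega, pow_add]
  field_simp

/-- asymptotics of the expected total number of weakly increasing
subsequences of a uniform random word, for fixed alphabet size a. -/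
theorem stmt5 (a : ℕ) (ha : 2 ≤ a) :
    Tendsto (fun n : ℕ =>
        expYtot n a (fun _ => (a : ℝ)⁻¹) /
          ((((a - 1).factorial : ℝ) * (a : ℝ) ^ (a - 1))⁻¹ * (n : ℝ) ^ (a - 1)
            * (1 + (a : ℝ)⁻¹) ^ (n + 1 - a)))
      atTop (nhds 1) := by
  obtain ⟨m, rfl⟩ : ∃ m, a = m + 1 := ⟨a - 1, by omega⟩
  set x : ℝ := ((m + 1 : ℕ) : ℝ)⁻¹ with hx
  have hexp : ∀ n, expYtot n (m + 1) (fun _ => x)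
      = ∑ r ∈ range (m + 1), m.choose r * (n.choose r * x ^ r * (1 + x) ^ (n - r)) := by
    intro n
    rw [expYtot_eq_sum_expY, sum_congr rfl fun k _ => expY_uniform n m k,
      sum_range_choose_mul_add_choose_mul_pow]
  have hlim := (tendsto_sum_choose_mul_pow_div m (x := x) (by positivity)).const_mul
    ((m.factorial : ℝ) * ((m + 1 : ℕ) : ℝ) ^ m)
  have hconst : (m.factorial : ℝ) * ((m + 1 : ℕ) : ℝ) ^ m * (x ^ m / m.factorial) = 1 := by
    rw [hx, inv_pow]
    field_simp
  rw [hconst] at hlim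
  simp only [Nat.add_sub_cancel, Nat.add_sub_add_right]
  refine hlim.congr fun n => ?_
  rw [hexp, eq_comm, mul_assoc _ ((n : ℝ) ^ m), div_mul_eq_div_div, div_inv_eq_mul]
  ring
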